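/- Let ρ be a density matrix indexed by (Fin 2 × Fin 2) such that Tr((Tr_A ρ)²) = 1, i.e., the reduced state of the second qubit is pure. Then ρ factorizes as the Kronecker product of its reduced states: ρ = (Tr_B ρ) ⊗ (Tr_A ρ). -/

import Mathlib

open ComplexOrder Kronecker

/-- A density matrix: Hermitian, positive semidefinite, trace one. -/
def IsDensityMatrix {n : Type*} [Fintype n] [DecidableEq n] (ρ : Matrix n n ℂ) : Prop :=
  ρ.IsHermitian ∧ ρ.PosSemidef ∧ ρ.trace = 1

/-- Partial trace over the first factor. -/
noncomputable def ptraceA {nA nB : ℕ} (M : Matrix (Fin nA × Fin nB) (Fin nA × Fin nB) ℂ) :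
    Matrix (Fin nB) (Fin nB) ℂ :=
  Matrix.of fun j j' => ∑ i, M (i, j) (i, j')

/-- Partial trace over the second factor. -/
noncomputable def ptraceB {nA nB : ℕ} (M : Matrix (Fin nA × Fin nB) (Fin nA × Fin nB) ℂ) :
    Matrix (Fin nA) (Fin nA) ℂ :=
  Matrix.of fun i i' => ∑ j, M (i, j) (i', j)

/-!
The reduced state `σ = Tr_A ρ` is positive semidefinite with `Tr σ = Tr σ² = 1`, so its eigenvalues
are nonnegative reals `λ` with `∑ λ = ∑ λ² = 1`; this forces a single eigenvalue `1` and the others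
`0`, i.e. `σ = v v*` for a unit vector `v`. Then `1 ⊗ σ` is a projection with
`Tr (ρ (1 ⊗ σ)) = Tr σ² = Tr ρ`, so `ρ (1 - 1 ⊗ σ)` has trace zero, and positivity of `ρ` forces
`ρ (1 - 1 ⊗ σ) = 0`. Hence `ρ = (1 ⊗ σ) ρ (1 ⊗ σ)`, which for rank-one `σ` is of the form `X ⊗ σ`,
and taking `Tr_B` identifies `X = Tr_B ρ`.
-/

open Matrix

theorem exists_eq_single_of_sum_eq_one_of_sum_sq_eq_one {ι : Type*} [Fintype ι] [DecidableEq ι]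
    {p : ι → ℝ} (hp : ∀ i, 0 ≤ p i) (hsum : ∑ i, p i = 1) (hsq : ∑ i, p i ^ 2 = 1) :
    ∃ k, p = Pi.single k 1 := by
  have hle : ∀ i, p i ≤ 1 := fun i =>
    hsum ▸ Finset.single_le_sum (fun j _ => hp j) (Finset.mem_univ i)
  have hidem : ∀ i, p i * p i = p i * 1 := by
    have h : ∑ i, (p i - p i ^ 2) = 0 := by rw [Finset.sum_sub_distrib, hsum, hsq, sub_self]
    intro i
    have hi := (Finset.sum_eq_zero_iff_of_nonneg fun j _ => by nlinarith [hp j, hle j]).mp h i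
      (Finset.mem_univ i)
    linarith
  obtain ⟨k, hk⟩ : ∃ k, p k ≠ 0 := by
    by_contra! h
    simp [h] at hsum
  have hk1 : p k = 1 := mul_left_cancel₀ hk (hidem k)
  refine ⟨k, funext fun i => ?_⟩
  rcases eq_or_ne i k with rfl | hik
  · simp [hk1]
  · have hik_le := Finset.add_le_sum (fun j _ => hp j) (Finset.mem_univ i) (Finset.mem_univ k) hik
    simp only [Pi.single_apply, hik, if_false]
    linarith [hp i]

theorem Matrix.PosSemidef.exists_eq_vecMulVec_of_trace_mul_self_eq_one {𝕜 n : Type*} [RCLike 𝕜]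
    [Fintype n] [DecidableEq n] {σ : Matrix n n 𝕜} (hσ : σ.PosSemidef) (htr : σ.trace = 1)
    (hpure : (σ * σ).trace = 1) :
    ∃ v : n → 𝕜, star v ⬝ᵥ v = 1 ∧ σ = vecMulVec v (star v) := by
  obtain ⟨U, hUU, hspec⟩ : ∃ U : Matrix n n 𝕜, star U * U = 1 ∧
      σ = U * diagonal (RCLike.ofReal ∘ hσ.1.eigenvalues) * star U :=
    ⟨_, Unitary.coe_star_mul_self hσ.1.eigenvectorUnitary, hσ.1.spectral_theorem⟩
  have hsum : ∑ i, hσ.1.eigenvalues i = 1 := by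
    exact_mod_cast hσ.1.trace_eq_sum_eigenvalues.symm.trans htr
  have hsq : ∑ i, hσ.1.eigenvalues i ^ 2 = 1 := by
    set D := diagonal (RCLike.ofReal ∘ hσ.1.eigenvalues : n → 𝕜)
    have hsq_spec : σ * σ = U * (D * D) * star U := by
      rw [hspec]
      simp only [mul_assoc]
      rw [← mul_assoc (star U) U, hUU, one_mul]
    rw [hsq_spec, trace_mul_cycle, hUU, one_mul, diagonal_mul_diagonal, trace_diagonal] at hpure
    simp only [Function.comp_apply] at hpure
    simp only [sq]
    exact_mod_cast hpure
  obtain ⟨k, hk⟩ := exists_eq_single_of_sum_eq_one_of_sum_sq_eq_one hσ.eigenvalues_nonneg hsum hsq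
  refine ⟨fun i => U i k, ?_, ?_⟩
  · simpa [mul_apply, dotProduct, mul_comm] using congrFun (congrFun hUU k) k
  · rw [hspec, hk]
    ext a b
    simp [mul_apply, diagonal, Pi.single_apply, vecMulVec_apply]

theorem IsStarProjection.kronecker {R m n : Type*} [CommSemiring R] [StarRing R] [Fintype m]
    [Fintype n] {P : Matrix m m R} {Q : Matrix n n R} (hP : IsStarProjection P)
    (hQ : IsStarProjection Q) : IsStarProjection (P ⊗ₖ Q) where
  isIdempotentElem := by
    rw [IsIdempotentElem, ← mul_kronecker_mul, hP.isIdempotentElem.eq, hQ.isIdempotentElem.eq]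
  isSelfAdjoint := by
    rw [IsSelfAdjoint, star_eq_conjTranspose, conjTranspose_kronecker, ← star_eq_conjTranspose,
      ← star_eq_conjTranspose, hP.isSelfAdjoint.star_eq, hQ.isSelfAdjoint.star_eq]

theorem isStarProjection_vecMulVec_star {R n : Type*} [CommSemiring R] [StarRing R] [Fintype n]
    {v : n → R} (hv : star v ⬝ᵥ v = 1) : IsStarProjection (vecMulVec v (star v)) where
  isIdempotentElem := by rw [IsIdempotentElem, vecMulVec_mul_vecMulVec, hv, one_smul]
  isSelfAdjoint := by
    rw [IsSelfAdjoint, star_eq_conjTranspose, conjTranspose_vecMulVec, star_star]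

open scoped MatrixOrder in
theorem Matrix.PosSemidef.mul_eq_zero_of_trace_mul_eq_zero {𝕜 n : Type*} [RCLike 𝕜] [Fintype n]
    {A E : Matrix n n 𝕜} (hA : A.PosSemidef) (hE : IsStarProjection E) (h : (A * E).trace = 0) :
    A * E = 0 := by
  classical
  obtain ⟨C, rfl⟩ := CStarAlgebra.nonneg_iff_eq_star_mul_self.mp hA.nonneg
  suffices hCE : C * E = 0 by rw [mul_assoc, hCE, mul_zero]
  have hEs : Eᴴ = E := hE.isSelfAdjoint.star_eq
  have hgram : (C * E)ᴴ * (C * E) = E * (star C * C * E) := by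
    rw [conjTranspose_mul, hEs]
    simp only [mul_assoc, star_eq_conjTranspose]
  rw [← trace_conjTranspose_mul_self_eq_zero_iff, hgram, trace_mul_comm, mul_assoc _ E,
    hE.isIdempotentElem.eq, h]

theorem one_kronecker_vecMulVec_mul_mul {R l n : Type*} [CommSemiring R] [Fintype l] [DecidableEq l]
    [Fintype n] (v w : n → R) (M : Matrix (l × n) (l × n) R) :
    (1 ⊗ₖ vecMulVec v w) * M * (1 ⊗ₖ vecMulVec v w) =
      (of fun i i' => ∑ k, ∑ k', w k * M (i, k) (i', k') * v k') ⊗ₖ vecMulVec v w := by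
  ext ⟨i, j⟩ ⟨i', j'⟩
  simp only [mul_apply, kroneckerMap_apply, one_apply, vecMulVec_apply, of_apply, ite_mul, mul_ite,
    one_mul, zero_mul, mul_zero, Fintype.sum_prod_type, Finset.sum_ite_irrel, Finset.sum_const_zero,
    Finset.sum_ite_eq, Finset.sum_ite_eq', Finset.mem_univ, if_true, Finset.sum_mul]
  rw [Finset.sum_comm]
  exact Finset.sum_congr rfl fun _ _ => Finset.sum_congr rfl fun _ _ => by ring

theorem ptraceA_eq_sum_submatrix {nA nB : ℕ} (M : Matrix (Fin nA × Fin nB) (Fin nA × Fin nB) ℂ) :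
    ptraceA M = ∑ i, M.submatrix (Prod.mk i) (Prod.mk i) := by
  ext j j'
  simp [ptraceA, Matrix.sum_apply]

theorem Matrix.PosSemidef.ptraceA {nA nB : ℕ} {M : Matrix (Fin nA × Fin nB) (Fin nA × Fin nB) ℂ}
    (hM : M.PosSemidef) : (ptraceA M).PosSemidef := by
  rw [ptraceA_eq_sum_submatrix]
  exact posSemidef_sum _ fun i _ => hM.submatrix _

theorem trace_mul_one_kronecker {nA nB : ℕ} (M : Matrix (Fin nA × Fin nB) (Fin nA × Fin nB) ℂ)
    (N : Matrix (Fin nB) (Fin nB) ℂ) : (M * (1 ⊗ₖ N)).trace = (ptraceA M * N).trace := by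
  simp [trace, mul_apply, Fintype.sum_prod_type, one_apply, ptraceA, Finset.sum_mul,
    Finset.sum_comm (γ := Fin nA)]

theorem trace_ptraceA {nA nB : ℕ} (M : Matrix (Fin nA × Fin nB) (Fin nA × Fin nB) ℂ) :
    (ptraceA M).trace = M.trace := by
  simpa using (trace_mul_one_kronecker M 1).symm

theorem ptraceB_kronecker {nA nB : ℕ} (A : Matrix (Fin nA) (Fin nA) ℂ)
    (B : Matrix (Fin nB) (Fin nB) ℂ) : ptraceB (A ⊗ₖ B) = B.trace • A := by
  ext i i'
  simp [ptraceB, trace, Finset.mul_sum, mul_comm]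

/-- If the reduced state of the second qubit of a two-qubit state ρ is pure,
then ρ factorizes as the Kronecker product of its reduced states. -/
theorem factorization_of_reduced_pure (ρ : Matrix (Fin 2 × Fin 2) (Fin 2 × Fin 2) ℂ)
    (hρ : IsDensityMatrix ρ)
    (hpure : (ptraceA ρ * ptraceA ρ).trace = 1) :
    ρ = ptraceB ρ ⊗ₖ ptraceA ρ := by
  obtain ⟨-, hpsd, htr⟩ := hρ
  have htrσ : (ptraceA ρ).trace = 1 := (trace_ptraceA ρ).trans htr
  obtain ⟨v, hv, hσ⟩ := hpsd.ptraceA.exists_eq_vecMulVec_of_trace_mul_self_eq_one htrσ hpure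
  have hP : IsStarProjection (1 ⊗ₖ ptraceA ρ) :=
    .kronecker (.one (Matrix (Fin 2) (Fin 2) ℂ)) (hσ ▸ isStarProjection_vecMulVec_star hv)
  have hR : ρ * (1 ⊗ₖ ptraceA ρ) = ρ := by
    have h := hpsd.mul_eq_zero_of_trace_mul_eq_zero hP.one_sub (by
      rw [mul_sub, mul_one, trace_sub, trace_mul_one_kronecker, htr, hpure, sub_self])
    rwa [mul_sub, mul_one, sub_eq_zero, eq_comm] at h
  have hL : (1 ⊗ₖ ptraceA ρ) * ρ = ρ := by
    simpa only [star_mul, hP.isSelfAdjoint.star_eq, hpsd.isHermitian.isSelfAdjoint.star_eq]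
      using congrArg star hR
  obtain ⟨X, hX⟩ : ∃ X, ρ = X ⊗ₖ ptraceA ρ :=
    ⟨_, calc ρ = (1 ⊗ₖ ptraceA ρ) * ρ * (1 ⊗ₖ ptraceA ρ) := by rw [hL, hR]
      _ = _ ⊗ₖ ptraceA ρ := by rw [hσ, one_kronecker_vecMulVec_mul_mul]⟩
  have hB : ptraceB ρ = X := by rw [hX, ptraceB_kronecker, htrσ, one_smul]
  rwa [hB]
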